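/- Vacuum plane waves: if h(u, v, x) = (1/2) Σ_{a,b} h_{ab}(v) x^a x^b where h_{ab} : ℝ → ℝ are smooth functions with h_{ab} = h_{ba} and satisfying the trace-free condition Σ_{a,b} η^{ab} h_{ab}(v) = 0 for all v, then the plane-fronted metric is Ricci flat: all components of the Ricci tensor vanish identically on ℝ^n. -/

import Mathlib

noncomputable section

/-- Partial derivative of a function on `ℝ^n` in the `μ`-th coordinate direction. -/
def pd {n : ℕ} (μ : Fin n) (f : (Fin n → ℝ) → ℝ) : (Fin n → ℝ) → ℝ :=
  fun p => fderiv ℝ f p (Pi.single μ 1)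

/-- Embedding of a transverse index `a ∈ {0,…,m-1}` as the coordinate index `a+2`. -/
def tIdx {m : ℕ} (a : Fin m) : Fin (m + 2) := a.succ.succ

/-- Covariant components `g_{αβ}` of the plane-fronted metric. -/
def gLow (m : ℕ) (η : Matrix (Fin m) (Fin m) ℝ) (h : (Fin (m + 2) → ℝ) → ℝ)
    (p : Fin (m + 2) → ℝ) (α β : Fin (m + 2)) : ℝ :=
  (if (α = 0 ∧ β = 1) ∨ (α = 1 ∧ β = 0) then 1 else 0)
    + (if α = 1 ∧ β = 1 then 2 * h p else 0)
    + ∑ a : Fin m, ∑ b : Fin m, if α = tIdx a ∧ β = tIdx b then η a b else 0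

/-- Contravariant components `g^{αβ}` of the plane-fronted metric. -/
def gUp (m : ℕ) (ηinv : Matrix (Fin m) (Fin m) ℝ) (h : (Fin (m + 2) → ℝ) → ℝ)
    (p : Fin (m + 2) → ℝ) (α β : Fin (m + 2)) : ℝ :=
  (if (α = 0 ∧ β = 1) ∨ (α = 1 ∧ β = 0) then 1 else 0)
    + (if α = 0 ∧ β = 0 then -(2 * h p) else 0)
    + ∑ a : Fin m, ∑ b : Fin m, if α = tIdx a ∧ β = tIdx b then ηinv a b else 0

/-- Christoffel symbols `Γ^α_{βγ}` of the plane-fronted metric. -/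
def chr (m : ℕ) (η ηinv : Matrix (Fin m) (Fin m) ℝ) (h : (Fin (m + 2) → ℝ) → ℝ)
    (p : Fin (m + 2) → ℝ) (α β γ : Fin (m + 2)) : ℝ :=
  (1 / 2) * ∑ δ : Fin (m + 2), gUp m ηinv h p α δ *
    (pd β (fun q => gLow m η h q δ γ) p + pd γ (fun q => gLow m η h q δ β) p
      - pd δ (fun q => gLow m η h q β γ) p)

/-- Riemann curvature tensor `R^α_{βγδ}` of the plane-fronted metric. -/
def riem (m : ℕ) (η ηinv : Matrix (Fin m) (Fin m) ℝ) (h : (Fin (m + 2) → ℝ) → ℝ)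
    (p : Fin (m + 2) → ℝ) (α β γ δ : Fin (m + 2)) : ℝ :=
  pd γ (fun q => chr m η ηinv h q α δ β) p - pd δ (fun q => chr m η ηinv h q α γ β) p
    + ∑ ε : Fin (m + 2), (chr m η ηinv h p α γ ε * chr m η ηinv h p ε δ β
      - chr m η ηinv h p α δ ε * chr m η ηinv h p ε γ β)

/-- Ricci tensor `R_{βδ}` of the plane-fronted metric. -/
def ricci (m : ℕ) (η ηinv : Matrix (Fin m) (Fin m) ℝ) (h : (Fin (m + 2) → ℝ) → ℝ)
    (p : Fin (m + 2) → ℝ) (β δ : Fin (m + 2)) : ℝ :=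
  ∑ α : Fin (m + 2), riem m η ηinv h p α β α δ

/-- Contravariant components `k^α = δ^α_0` of the null vector `k`. -/
def kUp {m : ℕ} (α : Fin (m + 2)) : ℝ := if α = 0 then 1 else 0

/-- Covariant components `k_α = δ^1_α` of the null vector `k`. -/
def kDown {m : ℕ} (α : Fin (m + 2)) : ℝ := if α = 1 then 1 else 0

/-- Covariant derivative `D_α k_β = −Σ_γ Γ^γ_{αβ} k_γ` of the constant-component
null covector `k`. -/
def covDk (m : ℕ) (η ηinv : Matrix (Fin m) (Fin m) ℝ) (h : (Fin (m + 2) → ℝ) → ℝ)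
    (p : Fin (m + 2) → ℝ) (α β : Fin (m + 2)) : ℝ :=
  - ∑ γ : Fin (m + 2), chr m η ηinv h p γ α β * kDown γ


section Aux

variable {n : ℕ}

lemma pd_const (μ : Fin n) (c : ℝ) (p) : pd μ (fun _ => c) p = 0 := by
  simp [pd]

lemma pd_add (μ : Fin n) {f g : (Fin n → ℝ) → ℝ} {p} (hf : DifferentiableAt ℝ f p)
    (hg : DifferentiableAt ℝ g p) :
    pd μ (fun q => f q + g q) p = pd μ f p + pd μ g p := by
  simp [pd, fderiv_fun_add hf hg]

lemma pd_sub (μ : Fin n) {f g : (Fin n → ℝ) → ℝ} {p} (hf : DifferentiableAt ℝ f p)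
    (hg : DifferentiableAt ℝ g p) :
    pd μ (fun q => f q - g q) p = pd μ f p - pd μ g p := by
  simp [pd, fderiv_fun_sub hf hg]

lemma pd_const_mul (μ : Fin n) (c : ℝ) {f : (Fin n → ℝ) → ℝ} {p} :
    pd μ (fun q => c * f q) p = c * pd μ f p := by
  by_cases hf : DifferentiableAt ℝ f p
  · simp [pd, fderiv_const_mul hf]
  · rcases eq_or_ne c 0 with rfl | hc
    · simp [pd]
    · have : ¬ DifferentiableAt ℝ (fun q => c * f q) p := by
        intro hcf
        have := hcf.const_mul c⁻¹
        simp only [← mul_assoc, inv_mul_cancel₀ hc, one_mul] at this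
        exact hf this
      simp [pd, fderiv_zero_of_not_differentiableAt, this, hf]

lemma pd_neg (μ : Fin n) {f : (Fin n → ℝ) → ℝ} {p} :
    pd μ (fun q => -f q) p = - pd μ f p := by
  have := pd_const_mul μ (-1) (f := f) (p := p)
  simpa using this

lemma pd_mul (μ : Fin n) {f g : (Fin n → ℝ) → ℝ} {p} (hf : DifferentiableAt ℝ f p)
    (hg : DifferentiableAt ℝ g p) :
    pd μ (fun q => f q * g q) p = pd μ f p * g p + f p * pd μ g p := by
  simp [pd, fderiv_fun_mul hf hg]; ring

lemma pd_sum (μ : Fin n) {ι : Type*} (s : Finset ι) (f : ι → (Fin n → ℝ) → ℝ) {p}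
    (hf : ∀ i ∈ s, DifferentiableAt ℝ (f i) p) :
    pd μ (fun q => ∑ i ∈ s, f i q) p = ∑ i ∈ s, pd μ (f i) p := by
  classical
  induction s using Finset.induction_on with
  | empty => simp [pd]
  | @insert a s' ha ih =>
    simp only [Finset.sum_insert ha]
    rw [pd_add μ (hf a (Finset.mem_insert_self a s'))
      (DifferentiableAt.fun_sum fun i hi => hf i (Finset.mem_insert_of_mem hi)),
      ih (fun i hi => hf i (Finset.mem_insert_of_mem hi))]

lemma pd_proj (μ i : Fin n) (p) : pd μ (fun q => q i) p = if i = μ then 1 else 0 := by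
  have : fderiv ℝ (fun q : Fin n → ℝ => q i) p = ContinuousLinearMap.proj i := by
    exact (ContinuousLinearMap.proj i : (Fin n → ℝ) →L[ℝ] ℝ).fderiv
  simp [pd, this, Pi.single_apply]

lemma pd_comp_proj (μ i : Fin n) (f : ℝ → ℝ) (hf : Differentiable ℝ f) (p) :
    pd μ (fun q => f (q i)) p = deriv f (p i) * (if i = μ then 1 else 0) := by
  have h1 : HasFDerivAt (fun q : Fin n → ℝ => q i)
      (ContinuousLinearMap.proj i : (Fin n → ℝ) →L[ℝ] ℝ) p :=
    (ContinuousLinearMap.proj i : (Fin n → ℝ) →L[ℝ] ℝ).hasFDerivAt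
  have h2 : HasFDerivAt (fun q : Fin n → ℝ => f (q i))
      (deriv f (p i) • (ContinuousLinearMap.proj i : (Fin n → ℝ) →L[ℝ] ℝ)) p :=
    (hf (p i)).hasDerivAt.comp_hasFDerivAt p h1
  simp [pd, h2.fderiv, Pi.single_apply]


variable {m : ℕ}

lemma tIdx_ne_zero (a : Fin m) : tIdx a ≠ (0 : Fin (m+2)) := Fin.succ_ne_zero _

lemma tIdx_ne_one (a : Fin m) : tIdx a ≠ (1 : Fin (m+2)) := by
  intro hc
  rw [tIdx, ← Fin.succ_zero_eq_one] at hc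
  exact Fin.succ_ne_zero _ (Fin.succ_injective _ hc)

lemma tIdx_inj {a b : Fin m} : tIdx a = tIdx b ↔ a = b := by
  constructor
  · intro hc
    exact Fin.succ_injective _ (Fin.succ_injective _ hc)
  · rintro rfl; rfl

lemma one_ne_tIdx (a : Fin m) : (1 : Fin (m+2)) ≠ tIdx a := (tIdx_ne_one a).symm
lemma zero_ne_tIdx (a : Fin m) : (0 : Fin (m+2)) ≠ tIdx a := (tIdx_ne_zero a).symm

lemma fin_zero_ne_one : (0 : Fin (m+2)) ≠ 1 := by
  intro hc
  have := congrArg Fin.val hc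
  simp [Fin.val_one] at this

lemma sum_fin_split (f : Fin (m+2) → ℝ) :
    ∑ α : Fin (m+2), f α = f 0 + f 1 + ∑ a : Fin m, f (tIdx a) := by
  rw [Fin.sum_univ_succ, Fin.sum_univ_succ, Fin.succ_zero_eq_one]
  ring_nf
  rfl


variable {n : ℕ}




lemma diff_proj (i : Fin n) : Differentiable ℝ (fun q : Fin n → ℝ => q i) :=
  (ContinuousLinearMap.proj i : (Fin n → ℝ) →L[ℝ] ℝ).differentiable

lemma diff_comp_proj (f : ℝ → ℝ) (hf : Differentiable ℝ f) (i : Fin n) :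
    Differentiable ℝ (fun q : Fin n → ℝ => f (q i)) := hf.comp (diff_proj i)

lemma diff_term2 (f : ℝ → ℝ) (hf : Differentiable ℝ f) (i j : Fin n) :
    Differentiable ℝ (fun q : Fin n → ℝ => f (q i) * q j) :=
  (diff_comp_proj f hf i).mul (diff_proj j)

lemma diff_term3 (f : ℝ → ℝ) (hf : Differentiable ℝ f) (i j k : Fin n) :
    Differentiable ℝ (fun q : Fin n → ℝ => f (q i) * q j * q k) :=
  (diff_term2 f hf i j).mul (diff_proj k)

lemma pd_term2 (μ : Fin n) (f : ℝ → ℝ) (hf : Differentiable ℝ f) (i j : Fin n) (p) :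
    pd μ (fun q => f (q i) * q j) p
      = deriv f (p i) * (if i = μ then 1 else 0) * p j
        + f (p i) * (if j = μ then 1 else 0) := by
  rw [pd_mul μ (diff_comp_proj f hf i p) (diff_proj j p), pd_comp_proj μ i f hf p,
    pd_proj]

lemma pd_term3 (μ : Fin n) (f : ℝ → ℝ) (hf : Differentiable ℝ f) (i j k : Fin n) (p) :
    pd μ (fun q => f (q i) * q j * q k) p
      = deriv f (p i) * (if i = μ then 1 else 0) * p j * p k
        + f (p i) * ((if j = μ then 1 else 0) * p k + p j * (if k = μ then 1 else 0)) := by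
  rw [pd_mul μ (diff_term2 f hf i j p) (diff_proj k p), pd_term2 μ f hf i j p, pd_proj]
  ring

variable {m : ℕ}

/-- `F_c(p) = ∂_{c+2} h = Σ_b H_{cb}(p 1) p_{b+2}`. -/
def Fc (H : Fin m → Fin m → ℝ → ℝ) (c : Fin m) (p : Fin (m + 2) → ℝ) : ℝ :=
  ∑ b : Fin m, H c b (p 1) * p (tIdx b)

/-- `G(p) = ∂_v h`. -/
def Gg (H : Fin m → Fin m → ℝ → ℝ) (p : Fin (m + 2) → ℝ) : ℝ :=
  (1 / 2) * ∑ a : Fin m, ∑ b : Fin m, deriv (H a b) (p 1) * p (tIdx a) * p (tIdx b)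

lemma Hdiff {H : Fin m → Fin m → ℝ → ℝ} (hH : ∀ a b, ContDiff ℝ (⊤ : ℕ∞) (H a b)) (a b : Fin m) :
    Differentiable ℝ (H a b) := (hH a b).differentiable (by simp)

lemma Hderiv_diff {H : Fin m → Fin m → ℝ → ℝ} (hH : ∀ a b, ContDiff ℝ (⊤ : ℕ∞) (H a b)) (a b : Fin m) :
    Differentiable ℝ (deriv (H a b)) :=
  ((contDiff_infty_iff_deriv.mp ((hH a b).of_le (by simp))).2).differentiable (by simp)

lemma diff_Fc {H : Fin m → Fin m → ℝ → ℝ} (hH : ∀ a b, ContDiff ℝ (⊤ : ℕ∞) (H a b)) (c : Fin m) :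
    Differentiable ℝ (Fc H c) :=
  Differentiable.fun_sum fun b _ => diff_term2 (H c b) (Hdiff hH c b) 1 (tIdx b)

lemma diff_Gg {H : Fin m → Fin m → ℝ → ℝ} (hH : ∀ a b, ContDiff ℝ (⊤ : ℕ∞) (H a b)) :
    Differentiable ℝ (Gg H) := by
  apply Differentiable.const_mul
  exact Differentiable.fun_sum fun a _ => Differentiable.fun_sum fun b _ =>
    diff_term3 (deriv (H a b)) (Hderiv_diff hH a b) 1 (tIdx a) (tIdx b)

lemma pd_Fc (μ : Fin (m + 2)) {H : Fin m → Fin m → ℝ → ℝ}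
    (hH : ∀ a b, ContDiff ℝ (⊤ : ℕ∞) (H a b)) (c : Fin m) (p) :
    pd μ (Fc H c) p
      = ∑ b : Fin m, (deriv (H c b) (p 1) * (if (1 : Fin (m+2)) = μ then 1 else 0) * p (tIdx b)
          + H c b (p 1) * (if tIdx b = μ then 1 else 0)) := by
  rw [show Fc H c = fun p => ∑ b : Fin m, H c b (p 1) * p (tIdx b) from rfl,
    pd_sum μ Finset.univ _ (fun b _ => diff_term2 (H c b) (Hdiff hH c b) 1 (tIdx b) p)]
  exact Finset.sum_congr rfl fun b _ => pd_term2 μ (H c b) (Hdiff hH c b) 1 (tIdx b) p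

lemma pd_Fc_zero {H : Fin m → Fin m → ℝ → ℝ} (hH : ∀ a b, ContDiff ℝ (⊤ : ℕ∞) (H a b)) (c : Fin m) (p) :
    pd 0 (Fc H c) p = 0 := by
  rw [pd_Fc 0 hH c p]
  simp [one_ne_tIdx, tIdx_ne_zero, (fin_zero_ne_one (m := m)).symm]

lemma pd_Fc_t {H : Fin m → Fin m → ℝ → ℝ} (hH : ∀ a b, ContDiff ℝ (⊤ : ℕ∞) (H a b))
    (c a : Fin m) (p) : pd (tIdx a) (Fc H c) p = H c a (p 1) := by
  rw [pd_Fc (tIdx a) hH c p]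
  simp [one_ne_tIdx, tIdx_inj]

lemma pd_Gg_zero {H : Fin m → Fin m → ℝ → ℝ} (hH : ∀ a b, ContDiff ℝ (⊤ : ℕ∞) (H a b)) (p) :
    pd 0 (Gg H) p = 0 := by
  rw [show Gg H = fun p => (1/2 : ℝ) * ∑ a : Fin m, ∑ b : Fin m,
      deriv (H a b) (p 1) * p (tIdx a) * p (tIdx b) from rfl, pd_const_mul,
    pd_sum _ Finset.univ _ (fun a _ => Differentiable.fun_sum
      (fun b _ => diff_term3 _ (Hderiv_diff hH a b) 1 (tIdx a) (tIdx b)) p)]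
  have : ∀ a : Fin m, pd 0 (fun q => ∑ b : Fin m,
      deriv (H a b) (q 1) * q (tIdx a) * q (tIdx b)) p = 0 := by
    intro a
    rw [pd_sum _ Finset.univ _ (fun b _ => diff_term3 _ (Hderiv_diff hH a b) 1 (tIdx a) (tIdx b) p)]
    apply Finset.sum_eq_zero
    intro b _
    rw [pd_term3 _ _ (Hderiv_diff hH a b)]
    simp [(fin_zero_ne_one (m := m)).symm, tIdx_ne_zero]
  simp [this]

lemma pd_ite (μ : Fin (m + 2)) (P : Prop) [Decidable P] (f g : (Fin (m+2) → ℝ) → ℝ) (p) :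
    pd μ (fun q => if P then f q else g q) p = if P then pd μ f p else pd μ g p := by
  by_cases hP : P <;> simp [hP]

lemma diff_ite (P : Prop) [Decidable P] {f g : (Fin (m+2) → ℝ) → ℝ}
    (hf : Differentiable ℝ f) (hg : Differentiable ℝ g) :
    Differentiable ℝ (fun q => if P then f q else g q) := by
  by_cases hP : P <;> simp [hP, hf, hg]

/-- The explicit plane-wave profile. -/
def hExp (H : Fin m → Fin m → ℝ → ℝ) : (Fin (m + 2) → ℝ) → ℝ :=
  fun p => (1 / 2) * ∑ a : Fin m, ∑ b : Fin m, H a b (p 1) * p (tIdx a) * p (tIdx b)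

lemma diff_hExp {H : Fin m → Fin m → ℝ → ℝ} (hH : ∀ a b, ContDiff ℝ (⊤ : ℕ∞) (H a b)) :
    Differentiable ℝ (hExp H) :=
  Differentiable.const_mul (Differentiable.fun_sum fun a _ => Differentiable.fun_sum fun b _ =>
    diff_term3 (H a b) (Hdiff hH a b) 1 (tIdx a) (tIdx b)) _

lemma pd_hExp (μ : Fin (m + 2)) {H : Fin m → Fin m → ℝ → ℝ}
    (hH : ∀ a b, ContDiff ℝ (⊤ : ℕ∞) (H a b)) (p) :
    pd μ (hExp H) p = (1 / 2) * ∑ a : Fin m, ∑ b : Fin m,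
      (deriv (H a b) (p 1) * (if (1 : Fin (m+2)) = μ then 1 else 0) * p (tIdx a) * p (tIdx b)
        + H a b (p 1) * ((if tIdx a = μ then 1 else 0) * p (tIdx b)
            + p (tIdx a) * (if tIdx b = μ then 1 else 0))) := by
  rw [show hExp H = fun p => (1/2 : ℝ) * ∑ a : Fin m, ∑ b : Fin m,
      H a b (p 1) * p (tIdx a) * p (tIdx b) from rfl, pd_const_mul,
    pd_sum _ Finset.univ _ (fun a _ => Differentiable.fun_sum
      (fun b _ => diff_term3 _ (Hdiff hH a b) 1 (tIdx a) (tIdx b)) p)]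
  congr 1
  refine Finset.sum_congr rfl fun a _ => ?_
  rw [pd_sum _ Finset.univ _ (fun b _ => diff_term3 _ (Hdiff hH a b) 1 (tIdx a) (tIdx b) p)]
  exact Finset.sum_congr rfl fun b _ => pd_term3 μ _ (Hdiff hH a b) 1 (tIdx a) (tIdx b) p

lemma pd_hExp_zero {H : Fin m → Fin m → ℝ → ℝ} (hH : ∀ a b, ContDiff ℝ (⊤ : ℕ∞) (H a b)) (p) :
    pd 0 (hExp H) p = 0 := by
  rw [pd_hExp 0 hH p]
  simp [(fin_zero_ne_one (m := m)).symm, tIdx_ne_zero]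

lemma pd_hExp_one {H : Fin m → Fin m → ℝ → ℝ} (hH : ∀ a b, ContDiff ℝ (⊤ : ℕ∞) (H a b)) (p) :
    pd 1 (hExp H) p = Gg H p := by
  rw [pd_hExp 1 hH p, Gg]
  simp [tIdx_ne_one]

lemma pd_hExp_t {H : Fin m → Fin m → ℝ → ℝ} (hH : ∀ a b, ContDiff ℝ (⊤ : ℕ∞) (H a b))
    (hHsymm : ∀ (a b : Fin m) (v : ℝ), H a b v = H b a v) (c : Fin m) (p) :
    pd (tIdx c) (hExp H) p = Fc H c p := by
  rw [pd_hExp (tIdx c) hH p, Fc]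
  simp only [one_ne_tIdx c, if_false, tIdx_inj, mul_zero, zero_mul, zero_add, mul_ite,
    mul_one, ite_mul, mul_add, add_zero]
  simp only [Finset.sum_add_distrib]
  rw [Finset.sum_comm (f := fun x y => if x = c then H x y (p 1) * (1 * p (tIdx y)) else 0)]
  simp only [Finset.sum_ite_eq', Finset.mem_univ, if_true, one_mul]
  have e2 : ∀ x : Fin m, H x c (p 1) = H c x (p 1) := fun x => hHsymm x c (p 1)
  simp only [e2]
  rw [← two_mul]
  ring

/-- Closed form for all partials of `hExp`. -/
def Dh (H : Fin m → Fin m → ℝ → ℝ) (μ : Fin (m + 2)) : (Fin (m + 2) → ℝ) → ℝ :=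
  fun p => (if μ = 1 then Gg H p else 0)
    + ∑ c : Fin m, (if μ = tIdx c then Fc H c p else 0)

lemma Dh_zero {H : Fin m → Fin m → ℝ → ℝ} (p) : Dh H 0 p = 0 := by
  simp [Dh, (fin_zero_ne_one (m := m)), zero_ne_tIdx]

lemma Dh_one {H : Fin m → Fin m → ℝ → ℝ} (p) : Dh H 1 p = Gg H p := by
  simp [Dh, one_ne_tIdx]

lemma Dh_t {H : Fin m → Fin m → ℝ → ℝ} (c : Fin m) (p) : Dh H (tIdx c) p = Fc H c p := by
  simp [Dh, tIdx_ne_one, tIdx_inj]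

lemma diff_Dh {H : Fin m → Fin m → ℝ → ℝ} (hH : ∀ a b, ContDiff ℝ (⊤ : ℕ∞) (H a b))
    (μ : Fin (m + 2)) : Differentiable ℝ (Dh H μ) :=
  Differentiable.add (diff_ite _ (diff_Gg hH) (differentiable_const 0))
    (Differentiable.fun_sum fun c _ => diff_ite _ (diff_Fc hH c) (differentiable_const 0))

lemma pd_hExp_Dh {H : Fin m → Fin m → ℝ → ℝ} (hH : ∀ a b, ContDiff ℝ (⊤ : ℕ∞) (H a b))
    (hHsymm : ∀ (a b : Fin m) (v : ℝ), H a b v = H b a v) (μ : Fin (m + 2)) (p) :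
    pd μ (hExp H) p = Dh H μ p := by
  induction μ using Fin.cases with
  | zero => rw [pd_hExp_zero hH, Dh_zero]
  | succ i =>
    induction i using Fin.cases with
    | zero => rw [Fin.succ_zero_eq_one, pd_hExp_one hH, Dh_one]
    | succ a => rw [show (Fin.succ (Fin.succ a)) = tIdx a from rfl,
        pd_hExp_t hH hHsymm, Dh_t]

lemma pd_zero_Dh {H : Fin m → Fin m → ℝ → ℝ} (hH : ∀ a b, ContDiff ℝ (⊤ : ℕ∞) (H a b))
    (δ : Fin (m + 2)) (p) : pd 0 (Dh H δ) p = 0 := by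
  rw [show Dh H δ = fun q => (if δ = 1 then Gg H q else (0:ℝ))
      + ∑ c : Fin m, (if δ = tIdx c then Fc H c q else 0) from rfl,
    pd_add 0 (diff_ite _ (diff_Gg hH) (differentiable_const 0) p)
      (Differentiable.fun_sum (fun c _ => diff_ite _ (diff_Fc hH c) (differentiable_const 0)) p),
    pd_ite, pd_sum 0 Finset.univ _
      (fun c _ => diff_ite _ (diff_Fc hH c) (differentiable_const 0) p)]
  simp only [pd_ite]
  simp [pd_Gg_zero hH, pd_Fc_zero hH, pd_const]

lemma pd_gLow (μ δ γ : Fin (m + 2)) (η : Matrix (Fin m) (Fin m) ℝ)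
    {h : (Fin (m + 2) → ℝ) → ℝ} (hh : Differentiable ℝ h) (p) :
    pd μ (fun q => gLow m η h q δ γ) p
      = if δ = 1 ∧ γ = 1 then 2 * pd μ h p else 0 := by
  have hrw : (fun q => gLow m η h q δ γ) = fun q =>
      ((if (δ = 0 ∧ γ = 1) ∨ (δ = 1 ∧ γ = 0) then (1:ℝ) else 0)
        + (if δ = 1 ∧ γ = 1 then 2 * h q else 0))
      + (∑ a : Fin m, ∑ b : Fin m, if δ = tIdx a ∧ γ = tIdx b then η a b else 0) := by
    funext q; rw [gLow]
  rw [hrw, pd_add (f := fun q => (if (δ = 0 ∧ γ = 1) ∨ (δ = 1 ∧ γ = 0) then (1:ℝ) else 0)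
        + (if δ = 1 ∧ γ = 1 then 2 * h q else 0))
      (g := fun _ => ∑ a : Fin m, ∑ b : Fin m, if δ = tIdx a ∧ γ = tIdx b then η a b else 0)
      μ (Differentiable.add (differentiable_const _)
        (diff_ite _ (hh.const_mul 2) (differentiable_const 0)) p)
      (differentiable_const _ p),
    pd_add (f := fun _ => if (δ = 0 ∧ γ = 1) ∨ (δ = 1 ∧ γ = 0) then (1:ℝ) else 0)
      (g := fun q => if δ = 1 ∧ γ = 1 then 2 * h q else 0)
      μ (differentiable_const _ p) (diff_ite _ (hh.const_mul 2) (differentiable_const 0) p),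
    pd_const, pd_const, pd_ite]
  by_cases hc : δ = 1 ∧ γ = 1 <;> simp [hc, pd_const_mul, pd_const]

section gUpVals
variable (ηinv : Matrix (Fin m) (Fin m) ℝ) (h : (Fin (m + 2) → ℝ) → ℝ) (p : Fin (m + 2) → ℝ)

lemma gUp_00 : gUp m ηinv h p 0 0 = -(2 * h p) := by
  rw [gUp]; simp [fin_zero_ne_one, zero_ne_tIdx]

lemma gUp_01 : gUp m ηinv h p 0 1 = 1 := by
  rw [gUp]; simp [fin_zero_ne_one, (fin_zero_ne_one (m := m)).symm, zero_ne_tIdx, one_ne_tIdx]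

lemma gUp_0t (b : Fin m) : gUp m ηinv h p 0 (tIdx b) = 0 := by
  rw [gUp]; simp [zero_ne_tIdx, tIdx_ne_zero, tIdx_ne_one]

lemma gUp_10 : gUp m ηinv h p 1 0 = 1 := by
  rw [gUp]; simp [(fin_zero_ne_one (m := m)).symm, zero_ne_tIdx, one_ne_tIdx]

lemma gUp_11 : gUp m ηinv h p 1 1 = 0 := by
  rw [gUp]; simp [(fin_zero_ne_one (m := m)).symm, one_ne_tIdx]

lemma gUp_1t (b : Fin m) : gUp m ηinv h p 1 (tIdx b) = 0 := by
  rw [gUp]; simp [(fin_zero_ne_one (m := m)).symm, one_ne_tIdx, tIdx_ne_zero, tIdx_ne_one]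

lemma gUp_t0 (a : Fin m) : gUp m ηinv h p (tIdx a) 0 = 0 := by
  rw [gUp]; simp [tIdx_ne_zero, tIdx_ne_one, zero_ne_tIdx]

lemma gUp_t1 (a : Fin m) : gUp m ηinv h p (tIdx a) 1 = 0 := by
  rw [gUp]; simp [tIdx_ne_zero, tIdx_ne_one, one_ne_tIdx]

lemma gUp_tt (a b : Fin m) : gUp m ηinv h p (tIdx a) (tIdx b) = ηinv a b := by
  rw [gUp]
  simp [tIdx_ne_zero, tIdx_ne_one, tIdx_inj, ite_and, Finset.sum_ite_eq, Finset.sum_ite_eq']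

end gUpVals

section chrVals
variable (η ηinv : Matrix (Fin m) (Fin m) ℝ) {H : Fin m → Fin m → ℝ → ℝ}

lemma chr_zero_case (hH : ∀ a b, ContDiff ℝ (⊤ : ℕ∞) (H a b))
    (hHsymm : ∀ (a b : Fin m) (v : ℝ), H a b v = H b a v) (p) (β γ : Fin (m + 2)) :
    chr m η ηinv (hExp H) p 0 β γ
      = (if γ = 1 then Dh H β p else 0) + (if β = 1 then Dh H γ p else 0)
        - (if β = 1 ∧ γ = 1 then Gg H p else 0) := by
  rw [chr]
  simp only [pd_gLow _ _ _ η (diff_hExp hH), pd_hExp_Dh hH hHsymm]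
  rw [sum_fin_split]
  simp only [gUp_00, gUp_01, gUp_0t, Dh_zero, Dh_one, fin_zero_ne_one, tIdx_ne_one,
    false_and, if_false, mul_zero, zero_mul, true_and, and_true, sub_zero, add_zero,
    zero_add, one_mul, ite_self, Finset.sum_const_zero]
  by_cases hβ : β = 1 <;> by_cases hγ : γ = 1 <;> simp [hβ, hγ] <;> ring

lemma chr_one_case (hH : ∀ a b, ContDiff ℝ (⊤ : ℕ∞) (H a b))
    (hHsymm : ∀ (a b : Fin m) (v : ℝ), H a b v = H b a v) (p) (β γ : Fin (m + 2)) :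
    chr m η ηinv (hExp H) p 1 β γ = 0 := by
  rw [chr]
  simp only [pd_gLow _ _ _ η (diff_hExp hH), pd_hExp_Dh hH hHsymm]
  rw [sum_fin_split]
  simp only [gUp_10, gUp_11, gUp_1t, Dh_zero, fin_zero_ne_one, tIdx_ne_one,
    false_and, if_false, mul_zero, zero_mul, sub_zero, add_zero, zero_add, one_mul,
    ite_self, Finset.sum_const_zero]

lemma chr_t_case (hH : ∀ a b, ContDiff ℝ (⊤ : ℕ∞) (H a b))
    (hHsymm : ∀ (a b : Fin m) (v : ℝ), H a b v = H b a v) (p) (a : Fin m)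
    (β γ : Fin (m + 2)) :
    chr m η ηinv (hExp H) p (tIdx a) β γ
      = -(if β = 1 ∧ γ = 1 then ∑ b : Fin m, ηinv a b * Fc H b p else 0) := by
  rw [chr]
  simp only [pd_gLow _ _ _ η (diff_hExp hH), pd_hExp_Dh hH hHsymm]
  rw [sum_fin_split]
  simp only [gUp_t0, gUp_t1, gUp_tt, Dh_zero, Dh_t, fin_zero_ne_one, tIdx_ne_one,
    false_and, if_false, mul_zero, zero_mul, sub_zero, add_zero, zero_add,
    ite_self, Finset.sum_const_zero]
  by_cases hc : β = 1 ∧ γ = 1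
  · simp only [hc.1, hc.2, and_self, if_true, if_pos]
    rw [Finset.mul_sum, ← Finset.sum_neg_distrib]
    refine Finset.sum_congr rfl fun b _ => ?_
    ring
  · simp [hc]

end chrVals

section chrDerived
variable (η ηinv : Matrix (Fin m) (Fin m) ℝ) {H : Fin m → Fin m → ℝ → ℝ}

lemma chr_diag (hH : ∀ a b, ContDiff ℝ (⊤ : ℕ∞) (H a b))
    (hHsymm : ∀ (a b : Fin m) (v : ℝ), H a b v = H b a v) (q) (α β : Fin (m + 2)) :
    chr m η ηinv (hExp H) q α α β = 0 := by
  induction α using Fin.cases with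
  | zero =>
    rw [chr_zero_case η ηinv hH hHsymm q 0 β]
    simp [Dh_zero, fin_zero_ne_one]
  | succ i =>
    induction i using Fin.cases with
    | zero => rw [Fin.succ_zero_eq_one, chr_one_case η ηinv hH hHsymm]
    | succ a =>
      rw [show (Fin.succ (Fin.succ a)) = tIdx a from rfl, chr_t_case η ηinv hH hHsymm]
      simp [tIdx_ne_one]

lemma chr_gamma0 (hH : ∀ a b, ContDiff ℝ (⊤ : ℕ∞) (H a b))
    (hHsymm : ∀ (a b : Fin m) (v : ℝ), H a b v = H b a v) (q) (α β : Fin (m + 2)) :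
    chr m η ηinv (hExp H) q α β 0 = 0 := by
  induction α using Fin.cases with
  | zero =>
    rw [chr_zero_case η ηinv hH hHsymm q β 0]
    simp [Dh_zero, fin_zero_ne_one]
  | succ i =>
    induction i using Fin.cases with
    | zero => rw [Fin.succ_zero_eq_one, chr_one_case η ηinv hH hHsymm]
    | succ a =>
      rw [show (Fin.succ (Fin.succ a)) = tIdx a from rfl, chr_t_case η ηinv hH hHsymm]
      simp [fin_zero_ne_one]

end chrDerived

end Aux

/-- vacuum plane waves: if `h(u,v,x) = (1/2) Σ_{a,b} h_{ab}(v) x^a x^b`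
with `h_{ab}` smooth, symmetric and trace-free (`Σ η^{ab} h_{ab}(v) = 0`), then the
plane-fronted metric is Ricci flat. -/
theorem stmt15 (m : ℕ) (hm : 1 ≤ m) (η ηinv : Matrix (Fin m) (Fin m) ℝ)
    (hηsymm : η.IsSymm) (hη : η * ηinv = 1) (hη' : ηinv * η = 1)
    (h : (Fin (m + 2) → ℝ) → ℝ) (hh : ContDiff ℝ (⊤ : ℕ∞) h)
    (H : Fin m → Fin m → ℝ → ℝ)
    (hHsmooth : ∀ a b : Fin m, ContDiff ℝ (⊤ : ℕ∞) (H a b))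
    (hHsymm : ∀ (a b : Fin m) (v : ℝ), H a b v = H b a v)
    (hHtrace : ∀ v : ℝ, ∑ a : Fin m, ∑ b : Fin m, ηinv a b * H a b v = 0)
    (hform : ∀ p : Fin (m + 2) → ℝ,
      h p = (1 / 2) * ∑ a : Fin m, ∑ b : Fin m, H a b (p 1) * p (tIdx a) * p (tIdx b)) :
    ∀ (p : Fin (m + 2) → ℝ) (β δ : Fin (m + 2)), ricci m η ηinv h p β δ = 0 := by
  have hfe : h = hExp H := funext hform
  subst hfe
  intro p β δ
  rw [ricci]
  simp only [riem]
  rw [Finset.sum_add_distrib, Finset.sum_sub_distrib]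
  have e2 : ∑ α : Fin (m+2), pd δ (fun q => chr m η ηinv (hExp H) q α α β) p = 0 := by
    refine Finset.sum_eq_zero fun α _ => ?_
    rw [show (fun q => chr m η ηinv (hExp H) q α α β) = fun _ => (0:ℝ) from
      funext fun q => chr_diag η ηinv hHsmooth hHsymm q α β]
    exact pd_const δ 0 p
  have e3 : ∑ α : Fin (m+2), ∑ ε : Fin (m+2),
      (chr m η ηinv (hExp H) p α α ε * chr m η ηinv (hExp H) p ε δ β
        - chr m η ηinv (hExp H) p α δ ε * chr m η ηinv (hExp H) p ε α β) = 0 := by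
    refine Finset.sum_eq_zero fun α _ => ?_
    rw [sum_fin_split]
    simp only [chr_diag η ηinv hHsmooth hHsymm p, chr_gamma0 η ηinv hHsmooth hHsymm p,
      chr_one_case η ηinv hHsmooth hHsymm p, zero_mul, mul_zero, sub_zero, zero_sub,
      add_zero, zero_add, neg_zero, neg_add_rev]
    refine Finset.sum_eq_zero fun c _ => ?_
    by_cases hα : α = 1
    · subst hα
      rw [chr_one_case η ηinv hHsmooth hHsymm p]
      ring
    · rw [chr_t_case η ηinv hHsmooth hHsymm p c]
      simp [hα]
  have e1 : ∑ α : Fin (m+2), pd α (fun q => chr m η ηinv (hExp H) q α δ β) p = 0 := by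
    rw [sum_fin_split (fun α => pd α (fun q => chr m η ηinv (hExp H) q α δ β) p)]
    have h0 : pd 0 (fun q => chr m η ηinv (hExp H) q 0 δ β) p = 0 := by
      rw [show (fun q => chr m η ηinv (hExp H) q 0 δ β) = fun q =>
          ((if β = 1 then Dh H δ q else 0) + (if δ = 1 then Dh H β q else 0))
            - (if δ = 1 ∧ β = 1 then Gg H q else 0) from
        funext fun q => chr_zero_case η ηinv hHsmooth hHsymm q δ β,
        pd_sub (f := fun q => (if β = 1 then Dh H δ q else 0) + (if δ = 1 then Dh H β q else 0))
          (g := fun q => if δ = 1 ∧ β = 1 then Gg H q else 0) 0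
          ((Differentiable.add
            (diff_ite _ (diff_Dh hHsmooth δ) (differentiable_const 0))
            (diff_ite _ (diff_Dh hHsmooth β) (differentiable_const 0))) p)
          (diff_ite _ (diff_Gg hHsmooth) (differentiable_const 0) p),
        pd_add (f := fun q => if β = 1 then Dh H δ q else 0)
          (g := fun q => if δ = 1 then Dh H β q else 0) 0
          (diff_ite _ (diff_Dh hHsmooth δ) (differentiable_const 0) p)
          (diff_ite _ (diff_Dh hHsmooth β) (differentiable_const 0) p)]
      simp only [pd_ite]
      simp [pd_zero_Dh hHsmooth, pd_Gg_zero hHsmooth, pd_const]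
    have h1 : pd 1 (fun q => chr m η ηinv (hExp H) q 1 δ β) p = 0 := by
      rw [show (fun q => chr m η ηinv (hExp H) q 1 δ β) = fun _ => (0:ℝ) from
        funext fun q => chr_one_case η ηinv hHsmooth hHsymm q δ β]
      exact pd_const 1 0 p
    have ht : ∀ a : Fin m, pd (tIdx a) (fun q => chr m η ηinv (hExp H) q (tIdx a) δ β) p
        = -(if δ = 1 ∧ β = 1 then ∑ b : Fin m, ηinv a b * H b a (p 1) else 0) := by
      intro a
      rw [show (fun q => chr m η ηinv (hExp H) q (tIdx a) δ β)
          = fun q => -(if δ = 1 ∧ β = 1 then ∑ b : Fin m, ηinv a b * Fc H b q else 0) from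
        funext fun q => chr_t_case η ηinv hHsmooth hHsymm q a δ β, pd_neg, pd_ite]
      by_cases hc : δ = 1 ∧ β = 1
      · simp only [hc, and_self, if_true]
        rw [pd_sum _ Finset.univ _
          (fun b _ => ((diff_Fc hHsmooth b).const_mul (ηinv a b)) p)]
        congr 1
        refine Finset.sum_congr rfl fun b _ => ?_
        rw [pd_const_mul, pd_Fc_t hHsmooth]
      · simp [hc, pd_const]
    rw [h0, h1, Finset.sum_congr rfl (fun a _ => ht a)]
    by_cases hc : δ = 1 ∧ β = 1
    · simp only [hc, and_self, if_true]
      have e : ∀ a : Fin m, ∑ b : Fin m, ηinv a b * H b a (p 1)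
          = ∑ b : Fin m, ηinv a b * H a b (p 1) :=
        fun a => Finset.sum_congr rfl fun b _ => by rw [hHsymm b a]
      simp only [e]
      simp [Finset.sum_neg_distrib, hHtrace (p 1)]
    · simp [hc]
  rw [e1, e2, e3]
  ring
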